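/- arXiv:1803.08135 — 6 statements merged into one kernel-verified Lean document; each statement's English description precedes it below -/
import Mathlib

section
/- For all y ≥ 0 and a ∈ ℝ, the conjugate Young function Φ*(y) = ∫₀^y arcsinh(t) dt satisfies Φ*(a·y) ≤ max(|a|, a²) · Φ*(y). -/
/-!
Since `arsinh` is odd, `Φ*` is even, so we may take `a = b ≥ 0`. Substituting `t = b u` gives
`Φ*(b y) = b ∫₀^y arsinh (b u) du`, and `arsinh (b u) ≤ max 1 b * arsinh u` for `u ≥ 0`: for
`b ≤ 1` by monotonicity, and for `b ≥ 1` because `sinh` is convex on `[0, ∞)` with `sinh 0 = 0`,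
whence `b sinh s ≤ sinh (b s)`.
-/

open Real Set

theorem ConvexOn.mul_le_comp_mul {f : ℝ → ℝ} (hf : ConvexOn ℝ (Ici 0) f) (hf₀ : f 0 = 0)
    {b s : ℝ} (hb : 1 ≤ b) (hs : 0 ≤ s) : b * f s ≤ f (b * s) := by
  have hb₀ : 0 < b := zero_lt_one.trans_le hb
  have hconv := hf.2 (mem_Ici.2 (mul_nonneg hb₀.le hs)) self_mem_Ici
    (inv_nonneg.2 hb₀.le) (sub_nonneg.2 (inv_le_one_of_one_le₀ hb)) (add_sub_cancel _ _)
  simp only [smul_eq_mul, mul_zero, add_zero, hf₀, inv_mul_cancel_left₀ hb₀.ne'] at hconv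
  rwa [← le_div_iff₀' hb₀, div_eq_inv_mul]

namespace Real

theorem convexOn_sinh : ConvexOn ℝ (Ici 0) sinh :=
  MonotoneOn.convexOn_of_deriv (convex_Ici 0) continuous_sinh.continuousOn
    differentiable_sinh.differentiableOn
    (by rw [deriv_sinh]; exact cosh_strictMonoOn.monotoneOn.mono interior_subset)

theorem mul_sinh_le_sinh_mul {b s : ℝ} (hb : 1 ≤ b) (hs : 0 ≤ s) : b * sinh s ≤ sinh (b * s) :=
  convexOn_sinh.mul_le_comp_mul sinh_zero hb hs

theorem arsinh_mul_le {b t : ℝ} (ht : 0 ≤ t) :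
    arsinh (b * t) ≤ max 1 b * arsinh t := by
  rcases le_total b 1 with hb₁ | hb₁
  · rw [max_eq_left hb₁, one_mul, arsinh_le_arsinh]
    exact mul_le_of_le_one_left ht hb₁
  · rw [max_eq_right hb₁, ← arsinh_sinh (b * arsinh t), arsinh_le_arsinh]
    simpa only [sinh_arsinh] using mul_sinh_le_sinh_mul hb₁ (arsinh_nonneg_iff.2 ht)

end Real

namespace intervalIntegral

theorem integral_zero_neg_of_odd {E : Type*} [NormedAddCommGroup E] [NormedSpace ℝ E]
    {f : ℝ → E} (hf : Function.Odd f) (x : ℝ) : ∫ t in 0..-x, f t = ∫ t in 0..x, f t := by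
  have := integral_comp_neg (a := 0) (b := x) f
  simp only [hf _, integral_neg, neg_zero] at this
  rw [integral_symm, ← this, neg_neg]

theorem integral_zero_mul_le {f : ℝ → ℝ} (hf : Continuous f) {b c y : ℝ} (hb : 0 ≤ b)
    (hy : 0 ≤ y) (hfb : ∀ t ∈ Icc 0 y, f (b * t) ≤ c * f t) :
    ∫ t in 0..b * y, f t ≤ b * c * ∫ t in 0..y, f t := by
  have hscale := smul_integral_comp_mul_left (a := 0) (b := y) f b
  simp only [mul_zero, smul_eq_mul] at hscale
  rw [← hscale, mul_assoc, ← integral_const_mul c]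
  refine mul_le_mul_of_nonneg_left (integral_mono_on hy ?_ ?_ hfb) hb
  · exact (hf.comp (continuous_const_mul b)).intervalIntegrable _ _
  · exact (continuous_const.mul hf).intervalIntegrable _ _

end intervalIntegral

/-- the conjugate Young function `Φ*(y) = ∫₀^y arcsinh t dt`
satisfies `Φ*(a·y) ≤ max (|a|, a²) · Φ*(y)` for `y ≥ 0` and any real `a`. -/
theorem conjYoung_delta2 (y a : ℝ) (hy : 0 ≤ y) :
    (∫ t in (0:ℝ)..(a * y), arsinh t) ≤
      max |a| (a ^ 2) * ∫ t in (0:ℝ)..y, arsinh t := by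
  have heven : ∫ t in (0:ℝ)..(a * y), arsinh t = ∫ t in (0:ℝ)..(|a| * y), arsinh t := by
    rcases abs_choice a with h | h
    · rw [h]
    · rw [h, neg_mul, intervalIntegral.integral_zero_neg_of_odd arsinh_neg]
  have hmax : max |a| (a ^ 2) = |a| * max 1 |a| := by
    rw [mul_max_of_nonneg _ _ (abs_nonneg a), mul_one, ← sq, sq_abs]
  rw [heven, hmax]
  exact intervalIntegral.integral_zero_mul_le continuous_arsinh (abs_nonneg a) hy
    fun t ht ↦ arsinh_mul_le ht.1
end

section
/- For all y ≥ 0, Ψ(y) ≤ (cosh−1)_*(y) ≤ (1/2)·Ψ(2y), where Ψ(y) = (1+y)log(1+y) − y and (cosh−1)_*(y) = ∫₀^y arcsinh(t) dt. -/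
/-!
Since `arsinh t = log (t + √(1 + t²))` and `1 + t ≤ t + √(1 + t²) ≤ 1 + 2t` for `t ≥ 0`, the
integrand of `(cosh - 1)_*` is squeezed between `log (1 + t)` and `log (1 + 2t)`, whose integrals
over `[0, y]` are `Ψ(y)` and `Ψ(2y) / 2`.
-/

open Real

lemma integral_log_one_add_mul {c : ℝ} (hc : c ≠ 0) (y : ℝ) :
    ∫ t in (0:ℝ)..y, log (1 + c * t) = c⁻¹ * ((1 + c * y) * log (1 + c * y) - c * y) := by
  rw [intervalIntegral.integral_comp_add_mul (fun u => log u) hc, integral_log, smul_eq_mul]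
  simp only [mul_zero, add_zero, log_one]
  ring

lemma intervalIntegrable_log_one_add_mul {c y : ℝ} (hc : 0 ≤ c) (hy : 0 ≤ y) :
    IntervalIntegrable (fun t => log (1 + c * t)) MeasureTheory.volume 0 y := by
  refine ContinuousOn.intervalIntegrable (ContinuousOn.log (by fun_prop) fun t ht => ?_)
  rw [Set.uIcc_of_le hy] at ht
  nlinarith [ht.1]

lemma log_one_add_le_arsinh {t : ℝ} (ht : 0 ≤ t) : log (1 + t) ≤ arsinh t := by
  rw [arsinh, add_comm 1 t]
  have : 1 ≤ √(1 + t ^ 2) := one_le_sqrt.mpr (by nlinarith)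
  exact log_le_log (by linarith) (by linarith)

lemma arsinh_le_log_one_add_two_mul {t : ℝ} (ht : 0 ≤ t) : arsinh t ≤ log (1 + 2 * t) := by
  rw [arsinh]
  have : √(1 + t ^ 2) ≤ 1 + t := sqrt_le_iff.mpr ⟨by linarith, by nlinarith⟩
  exact log_le_log (by positivity) (by linarith)

/-- `Ψ(y) ≤ (cosh−1)_*(y) ≤ (1/2)Ψ(2y)` for `y ≥ 0`,
where `Ψ(y) = (1+y)log(1+y) − y` and `(cosh−1)_*(y) = ∫₀^y arcsinh t dt`. -/
theorem conjYoung_compare (y : ℝ) (hy : 0 ≤ y) :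
    (1 + y) * log (1 + y) - y ≤ (∫ t in (0:ℝ)..y, arsinh t) ∧
      (∫ t in (0:ℝ)..y, arsinh t) ≤
        (1 / 2) * ((1 + 2 * y) * log (1 + 2 * y) - 2 * y) := by
  have h_arsinh : IntervalIntegrable arsinh MeasureTheory.volume 0 y :=
    continuous_arsinh.intervalIntegrable 0 y
  constructor
  · calc (1 + y) * log (1 + y) - y = ∫ t in (0:ℝ)..y, log (1 + 1 * t) := by
          rw [integral_log_one_add_mul one_ne_zero]; ring_nf
      _ ≤ ∫ t in (0:ℝ)..y, arsinh t :=
          intervalIntegral.integral_mono_on hy (intervalIntegrable_log_one_add_mul zero_le_one hy)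
            h_arsinh fun t ht => by simpa using log_one_add_le_arsinh ht.1
  · calc (∫ t in (0:ℝ)..y, arsinh t) ≤ ∫ t in (0:ℝ)..y, log (1 + 2 * t) :=
          intervalIntegral.integral_mono_on hy h_arsinh
            (intervalIntegrable_log_one_add_mul zero_le_two hy)
            fun t ht => arsinh_le_log_one_add_two_mul ht.1
      _ = (1 / 2) * ((1 + 2 * y) * log (1 + 2 * y) - 2 * y) := by
          rw [integral_log_one_add_mul two_ne_zero, one_div]
end

section
/- Let M be the standard Gaussian density on ℝⁿ and let f be a probability density with respect to M·dx (i.e. f ≥ 0 and ∫ f(x)M(x)dx = 1). Then ∫ f(x)·log f(x)·M(x)dx < ∞ (finite negative entropy) if and only if ∫ (cosh−1)_*(f(x))·M(x)dx < ∞. -/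
open Real MeasureTheory
open scoped ENNReal

noncomputable section

/-- The standard `n`-dimensional Gaussian density. -/
def gaussM (n : ℕ) (x : EuclideanSpace ℝ (Fin n)) : ℝ :=
  (2 * π) ^ (-(n : ℝ) / 2) * exp (-‖x‖ ^ 2 / 2)

/-- The standard Gaussian measure `M(x)dx` on `ℝⁿ`. -/
def gaussMeasure (n : ℕ) : Measure (EuclideanSpace ℝ (Fin n)) :=
  volume.withDensity fun x => ENNReal.ofReal (gaussM n x)

/-- The conjugate Young function `(cosh−1)_*`. -/
def conjY (y : ℝ) : ℝ := ∫ t in (0:ℝ)..y, arsinh t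

/-! On `[0, ∞)` the Young function `(cosh−1)_*(y) = y arsinh y − √(1 + y²) + 1` differs from
`y log y` by at most `1 + y`, since `0 ≤ y (arsinh y − log y) = y log (1 + √(1 + y⁻²)) ≤ √(1 + y²)`.
The Gaussian measure is finite and `∫ f M = 1` makes `f` integrable, so `1 + f` is an integrable
majorant of the difference of the two integrands. -/

lemma hasDerivAt_mul_arsinh_sub_sqrt (t : ℝ) :
    HasDerivAt (fun t : ℝ => t * arsinh t - √(1 + t ^ 2)) (arsinh t) t := by
  have hpos : 0 < 1 + t ^ 2 := by positivity
  have hsqrt : HasDerivAt (fun t : ℝ => √(1 + t ^ 2)) (2 * t / (2 * √(1 + t ^ 2))) t :=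
    (((hasDerivAt_pow 2 t).const_add 1).sqrt hpos.ne').congr_deriv (by ring)
  refine (((hasDerivAt_id' t).mul (hasDerivAt_arsinh t)).sub hsqrt).congr_deriv ?_
  field_simp
  ring

lemma conjY_eq (y : ℝ) : conjY y = y * arsinh y - √(1 + y ^ 2) + 1 := by
  rw [conjY, intervalIntegral.integral_eq_sub_of_hasDerivAt
    (fun t _ => hasDerivAt_mul_arsinh_sub_sqrt t) (continuous_arsinh.intervalIntegrable 0 y)]
  simp

lemma continuous_conjY : Continuous conjY :=
  intervalIntegral.continuous_primitive (fun _ _ => continuous_arsinh.intervalIntegrable _ _) 0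

lemma mul_log_le_mul_arsinh {y : ℝ} (hy : 0 ≤ y) : y * log y ≤ y * arsinh y := by
  rcases hy.eq_or_lt with rfl | hy
  · simp
  exact mul_le_mul_of_nonneg_left (log_le_log hy (le_add_of_nonneg_right (sqrt_nonneg _))) hy.le

lemma mul_arsinh_le_mul_log_add_sqrt {y : ℝ} (hy : 0 ≤ y) :
    y * arsinh y ≤ y * log y + √(1 + y ^ 2) := by
  rcases hy.eq_or_lt with rfl | hy
  · simp
  have hsum : 0 < y + √(1 + y ^ 2) := by positivity
  have hlog : arsinh y - log y ≤ (y + √(1 + y ^ 2)) / y - 1 := by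
    rw [arsinh, ← log_div hsum.ne' hy.ne']
    exact log_le_sub_one_of_pos (div_pos hsum hy)
  calc y * arsinh y = y * log y + y * (arsinh y - log y) := by ring
    _ ≤ y * log y + y * ((y + √(1 + y ^ 2)) / y - 1) := by gcongr
    _ = y * log y + √(1 + y ^ 2) := by field_simp; ring

lemma abs_conjY_sub_mul_log_le {y : ℝ} (hy : 0 ≤ y) : |conjY y - y * log y| ≤ 1 + y := by
  have hsqrt_ge : 1 ≤ √(1 + y ^ 2) := one_le_sqrt.mpr (by nlinarith)
  have hsqrt_le : √(1 + y ^ 2) ≤ 1 + y := sqrt_le_iff.mpr ⟨by positivity, by nlinarith⟩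
  rw [conjY_eq, abs_le]
  constructor <;> linarith [mul_log_le_mul_arsinh hy, mul_arsinh_le_mul_log_add_sqrt hy]

theorem integrable_mul_log_iff_integrable_conjY {α : Type*} [MeasurableSpace α] {μ : Measure α}
    [IsFiniteMeasure μ] {f : α → ℝ} (hf : Integrable f μ) (hpos : 0 ≤ᵐ[μ] f) :
    Integrable (fun x => f x * log (f x)) μ ↔ Integrable (fun x => conjY (f x)) μ := by
  have hdiff : Integrable (fun x => conjY (f x) - f x * log (f x)) μ := by
    refine ((integrable_const 1).add hf).mono'
      ((continuous_conjY.comp_aestronglyMeasurable hf.1).sub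
        (continuous_mul_log.comp_aestronglyMeasurable hf.1)) ?_
    filter_upwards [hpos] with x hx
    exact abs_conjY_sub_mul_log_le hx
  rw [← integrable_add_iff_integrable_left' hdiff]
  simp only [add_sub_cancel]

lemma integrable_gaussM (n : ℕ) : Integrable (gaussM n) := by
  have hexp := (GaussianFourier.integrable_cexp_neg_mul_sq_norm_add
    (V := EuclideanSpace ℝ (Fin n)) (b := 1 / 2) (by norm_num) 0 0).norm
  refine (hexp.const_mul ((2 * π) ^ (-(n : ℝ) / 2))).congr (ae_of_all _ fun x => ?_)
  simp only [gaussM, Complex.norm_exp]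
  congr 2
  simp [← Complex.ofReal_pow]
  ring

instance (n : ℕ) : IsFiniteMeasure (gaussMeasure n) :=
  isFiniteMeasure_withDensity (integrable_gaussM n).lintegral_lt_top.ne

theorem finite_entropy_iff_mixture_general {n : ℕ} (f : EuclideanSpace ℝ (Fin n) → ℝ)
    (hpos : ∀ x, 0 ≤ f x)
    (hdens : ∫ x, f x ∂(gaussMeasure n) = 1) :
    Integrable (fun x => f x * log (f x)) (gaussMeasure n) ↔
      Integrable (fun x => conjY (f x)) (gaussMeasure n) :=
  integrable_mul_log_iff_integrable_conjY
    (Integrable.of_integral_ne_zero (hdens ▸ one_ne_zero)) (ae_of_all _ hpos)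

/-- a density `f` of the Gaussian space has finite (negative) entropy
iff `f` belongs to the mixture space `L^{(cosh−1)_*}(M)`. -/
theorem finite_entropy_iff_mixture {n : ℕ} (f : EuclideanSpace ℝ (Fin n) → ℝ)
    (hmeas : Measurable f) (hpos : ∀ x, 0 ≤ f x)
    (hdens : ∫ x, f x ∂(gaussMeasure n) = 1) :
    Integrable (fun x => f x * log (f x)) (gaussMeasure n) ↔
      Integrable (fun x => conjY (f x)) (gaussMeasure n) :=
  finite_entropy_iff_mixture_general f hpos hdens
end
end

section
/- Let f : ℝⁿ → ℝ be C² with Hessian uniformly dominated: x*·Hess f(y)·x ≤ λ|x|² for all x, y ∈ ℝⁿ with λ ≥ 0. Then for every α with 0 < α < 1/λ (any α > 0 if λ = 0), ∫ exp(α f(x)) M(x) dx < ∞. In particular every polynomial of degree ≤ 2 belongs to the exponential Orlicz space L^{cosh−1}(M). -/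
/-!
Restricting `f` to the segment from `0` to `x`, the Hessian bound gives the one-sided Taylor
estimate `f x ≤ f 0 + Df(0) x + λ‖x‖²/2`. Absorbing the linear term into a small multiple of
`‖x‖²`, `α f x ≤ C + a‖x‖²` for some `a < 1/2` as soon as `αλ < 1`, and `exp (a‖x‖²)` is
integrable against the density `exp (-‖x‖²/2)`. A polynomial of degree at most two satisfies
`|p x| ≤ C (1 + ‖x‖²)`, so `cosh (β p) - 1 ≤ exp |β p|` is integrable for `β = 1/(4C)`.
-/

open Real MeasureTheory
open scoped ENNReal

noncomputable section

theorem le_add_deriv_add_of_hasDerivAt_le {g g' g'' : ℝ → ℝ} {c : ℝ}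
    (hg : ∀ t, HasDerivAt g (g' t) t) (hg' : ∀ t, HasDerivAt g' (g'' t) t)
    (hc : ∀ t, g'' t ≤ c) : g 1 ≤ g 0 + g' 0 + c / 2 := by
  -- `g t - c t²/2` has antitone derivative, so by the mean value theorem its increment over
  -- `[0, 1]` is at most its derivative at `0`.
  have hslope : Antitone fun t => g' t - c * t :=
    antitone_of_hasDerivAt_nonpos (f' := fun t => g'' t - c)
      (fun t => ((hg' t).sub ((hasDerivAt_id t).const_mul c)).congr_deriv (by simp))
      (fun t => sub_nonpos.mpr (hc t))
  have hderiv : ∀ t, HasDerivAt (fun t => g t - c * t ^ 2 / 2) (g' t - c * t) t := fun t =>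
    ((hg t).sub (((hasDerivAt_pow 2 t).const_mul c).div_const 2)).congr_deriv (by ring)
  obtain ⟨ξ, hξ, hξ_eq⟩ := exists_hasDerivAt_eq_slope _ _ zero_lt_one
    (fun t _ => (hderiv t).continuousAt.continuousWithinAt) (fun t _ => hderiv t)
  have hslope_le := hslope hξ.1.le
  simp only [mul_zero, sub_zero] at hslope_le
  rw [hξ_eq] at hslope_le
  linarith

theorem le_add_fderiv_add_of_iteratedFDeriv_two_le {E : Type*} [NormedAddCommGroup E]
    [NormedSpace ℝ E] {f : E → ℝ} (hf : ContDiff ℝ 2 f) {x : E} {c : ℝ}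
    (hc : ∀ t : ℝ, iteratedFDeriv ℝ 2 f (t • x) ![x, x] ≤ c) :
    f x ≤ f 0 + fderiv ℝ f 0 x + c / 2 := by
  have hline : ∀ t : ℝ, HasDerivAt (fun t : ℝ => t • x) x t := fun t => by
    simpa using (hasDerivAt_id t).smul_const x
  have hD : Differentiable ℝ (fderiv ℝ f) :=
    (hf.fderiv_right (m := 1) le_rfl).differentiable one_ne_zero
  have hg : ∀ t : ℝ, HasDerivAt (fun t => f (t • x)) (fderiv ℝ f (t • x) x) t := fun t =>
    ((hf.differentiable two_ne_zero) (t • x)).hasFDerivAt.comp_hasDerivAt t (hline t)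
  have hg' : ∀ t : ℝ, HasDerivAt (fun t => fderiv ℝ f (t • x) x)
      (iteratedFDeriv ℝ 2 f (t • x) ![x, x]) t := fun t => by
    have hDline : HasDerivAt (fun t : ℝ => fderiv ℝ f (t • x))
        (fderiv ℝ (fderiv ℝ f) (t • x) x) t :=
      (hD (t • x)).hasFDerivAt.comp_hasDerivAt t (hline t)
    have := hDline.clm_apply (hasDerivAt_const t x)
    rw [iteratedFDeriv_two_apply]
    simpa using this
  simpa using le_add_deriv_add_of_hasDerivAt_le hg hg' hc

theorem mul_le_add_mul_sq (b r : ℝ) {ε : ℝ} (hε : 0 < ε) :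
    b * r ≤ b ^ 2 / (4 * ε) + ε * r ^ 2 := by
  rw [div_add' _ _ _ (by positivity), le_div_iff₀ (by positivity)]
  nlinarith [sq_nonneg (2 * ε * r - b)]

theorem exists_le_add_mul_norm_sq_of_iteratedFDeriv_two_le {E : Type*} [NormedAddCommGroup E]
    [NormedSpace ℝ E] {f : E → ℝ} (hf : ContDiff ℝ 2 f) {lam : ℝ}
    (hH : ∀ y x : E, iteratedFDeriv ℝ 2 f y ![x, x] ≤ lam * ‖x‖ ^ 2) {a : ℝ}
    (ha : lam / 2 < a) :
    ∃ C, ∀ x, f x ≤ C + a * ‖x‖ ^ 2 := by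
  have hε : 0 < a - lam / 2 := sub_pos.mpr ha
  refine ⟨f 0 + ‖fderiv ℝ f 0‖ ^ 2 / (4 * (a - lam / 2)), fun x => ?_⟩
  have htaylor := le_add_fderiv_add_of_iteratedFDeriv_two_le hf (fun t => hH (t • x) x)
  have hlin : fderiv ℝ f 0 x ≤ ‖fderiv ℝ f 0‖ * ‖x‖ :=
    (le_abs_self _).trans ((fderiv ℝ f 0).le_opNorm x)
  have habsorb := mul_le_add_mul_sq ‖fderiv ℝ f 0‖ ‖x‖ hε
  linarith

theorem abs_prod_pow_le_norm_pow_degree {n : ℕ} (x : EuclideanSpace ℝ (Fin n))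
    (d : Fin n →₀ ℕ) :
    |∏ i, x i ^ d i| ≤ ‖x‖ ^ d.degree := by
  rw [Finsupp.degree_eq_sum, Finset.abs_prod, ← Finset.prod_pow_eq_pow_sum]
  gcongr with i
  rw [abs_pow, ← Real.norm_eq_abs]
  gcongr
  exact PiLp.norm_apply_le x i

theorem pow_le_one_add_sq (r : ℝ) {k : ℕ} (hk : k ≤ 2) : r ^ k ≤ 1 + r ^ 2 := by
  interval_cases k
  · simp [sq_nonneg]
  · nlinarith [sq_nonneg (r - 1)]
  · simp

theorem MvPolynomial.exists_abs_eval_le_mul_one_add_norm_sq {n : ℕ} (p : MvPolynomial (Fin n) ℝ)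
    (hp : p.totalDegree ≤ 2) :
    ∃ C, 0 < C ∧ ∀ x : EuclideanSpace ℝ (Fin n),
      |MvPolynomial.eval (fun i => x i) p| ≤ C * (1 + ‖x‖ ^ 2) := by
  refine ⟨∑ d ∈ p.support, |p.coeff d| + 1, by positivity, fun x => ?_⟩
  calc |MvPolynomial.eval (fun i => x i) p|
      ≤ ∑ d ∈ p.support, |p.coeff d| * (1 + ‖x‖ ^ 2) := by
        rw [MvPolynomial.eval_eq']
        refine (Finset.abs_sum_le_sum_abs _ _).trans (Finset.sum_le_sum fun d hd => ?_)
        rw [abs_mul]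
        gcongr
        exact (abs_prod_pow_le_norm_pow_degree x d).trans
          (pow_le_one_add_sq ‖x‖ ((MvPolynomial.le_totalDegree hd).trans hp))
    _ ≤ (∑ d ∈ p.support, |p.coeff d| + 1) * (1 + ‖x‖ ^ 2) := by
        rw [← Finset.sum_mul]
        gcongr
        linarith

theorem abs_cosh_sub_one_le_exp_abs (t : ℝ) : |cosh t - 1| ≤ exp |t| := by
  rw [abs_of_nonneg (sub_nonneg.mpr (one_le_cosh t)), ← cosh_abs, cosh_eq]
  have := exp_le_one_iff.mpr (neg_nonpos.mpr (abs_nonneg t))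
  have := one_le_exp (abs_nonneg t)
  linarith

section Gaussian

variable {n : ℕ}

theorem integrable_exp_mul_norm_sq_gaussMeasure {a : ℝ} (ha : a < 1 / 2) :
    Integrable (fun x : EuclideanSpace ℝ (Fin n) => exp (a * ‖x‖ ^ 2)) (gaussMeasure n) := by
  have hM : Continuous (gaussM n) := by unfold gaussM; fun_prop
  refine (integrable_withDensity_iff (f := fun x => ENNReal.ofReal (gaussM n x))
    (ENNReal.measurable_ofReal.comp hM.measurable) (.of_forall fun _ => ENNReal.ofReal_lt_top)).2 ?_
  have hgauss := (GaussianFourier.integrable_cexp_neg_mul_sq_norm_add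
    (b := ((1 / 2 - a : ℝ) : ℂ)) (by simpa using ha) 0 (0 : EuclideanSpace ℝ (Fin n))).norm
  refine (hgauss.const_mul ((2 * π) ^ (-(n : ℝ) / 2))).congr (.of_forall fun x => ?_)
  dsimp only
  rw [ENNReal.toReal_ofReal (by unfold gaussM; positivity), gaussM]
  simp only [zero_mul, add_zero, Complex.norm_exp, neg_mul, Complex.neg_re, ← Complex.ofReal_pow,
    ← Complex.ofReal_mul, Complex.ofReal_re]
  rw [mul_left_comm, ← exp_add]
  ring_nf

theorem integrable_exp_gaussMeasure_of_le_add_mul_norm_sq {g : EuclideanSpace ℝ (Fin n) → ℝ}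
    (hg : AEStronglyMeasurable g (gaussMeasure n)) {a C : ℝ} (ha : a < 1 / 2)
    (hle : ∀ x, g x ≤ C + a * ‖x‖ ^ 2) :
    Integrable (fun x => exp (g x)) (gaussMeasure n) := by
  refine ((integrable_exp_mul_norm_sq_gaussMeasure ha).const_mul (exp C)).mono'
    (continuous_exp.comp_aestronglyMeasurable hg) (.of_forall fun x => ?_)
  rw [norm_of_nonneg (exp_nonneg _), ← exp_add]
  exact exp_le_exp.mpr (hle x)

theorem integrable_exp_mul_gaussMeasure_of_iteratedFDeriv_two_le
    {f : EuclideanSpace ℝ (Fin n) → ℝ} (hf : ContDiff ℝ 2 f) {lam : ℝ}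
    (hH : ∀ y x, iteratedFDeriv ℝ 2 f y ![x, x] ≤ lam * ‖x‖ ^ 2) {α : ℝ} (hα : 0 < α)
    (hαlam : α * lam < 1) :
    Integrable (fun x => exp (α * f x)) (gaussMeasure n) := by
  have hlam : lam < α⁻¹ := ((lt_inv_mul_iff₀ hα).mpr hαlam).trans_eq (mul_one _)
  -- `(λ + α⁻¹)/4` is the midpoint of `λ/2` and `1/(2α)`.
  obtain ⟨C, hC⟩ := exists_le_add_mul_norm_sq_of_iteratedFDeriv_two_le hf hH
    (a := (lam + α⁻¹) / 4) (by linarith)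
  refine integrable_exp_gaussMeasure_of_le_add_mul_norm_sq
    (continuous_const.mul hf.continuous).aestronglyMeasurable (C := α * C)
    (a := α * ((lam + α⁻¹) / 4)) ?_ fun x => ?_
  · rw [mul_div_assoc', mul_add, mul_inv_cancel₀ hα.ne']
    linarith
  · nlinarith [hC x]

theorem MvPolynomial.exists_integrable_cosh_mul_eval_sub_one (p : MvPolynomial (Fin n) ℝ)
    (hp : p.totalDegree ≤ 2) :
    ∃ β : ℝ, 0 < β ∧ Integrable
      (fun x : EuclideanSpace ℝ (Fin n) => cosh (β * MvPolynomial.eval (fun i => x i) p) - 1)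
      (gaussMeasure n) := by
  obtain ⟨C, hC, hbound⟩ := p.exists_abs_eval_le_mul_one_add_norm_sq hp
  have hcont : Continuous fun x : EuclideanSpace ℝ (Fin n) =>
      MvPolynomial.eval (fun i => x i) p :=
    (MvPolynomial.continuous_eval p).comp
      (continuous_pi fun i => (EuclideanSpace.proj i).continuous)
  refine ⟨(4 * C)⁻¹, by positivity, ?_⟩
  have hexp := integrable_exp_gaussMeasure_of_le_add_mul_norm_sq
    (g := fun x => |(4 * C)⁻¹ * MvPolynomial.eval (fun i => x i) p|)
    (continuous_const.mul hcont).abs.aestronglyMeasurable (C := 1 / 4) (a := 1 / 4) (by norm_num)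
    fun x => by
      rw [abs_mul, abs_of_pos (by positivity)]
      calc (4 * C)⁻¹ * |MvPolynomial.eval (fun i => x i) p|
          ≤ (4 * C)⁻¹ * (C * (1 + ‖x‖ ^ 2)) := by gcongr; exact hbound x
        _ = 1 / 4 + 1 / 4 * ‖x‖ ^ 2 := by field_simp
  exact hexp.mono' ((continuous_cosh.comp (continuous_const.mul hcont)).sub
    continuous_const).aestronglyMeasurable (.of_forall fun x => abs_cosh_sub_one_le_exp_abs _)

end Gaussian

/-- if `f` is `C²` with Hessian uniformly dominated by `λ|x|²`, then
`∫ exp(α f) dM < ∞` for `0 < α` with `αλ < 1`; in particular every polynomial of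
degree at most 2 belongs to the exponential Orlicz space `L^{cosh−1}(M)`. -/
theorem exp_integrable_of_hessian_dominated {n : ℕ} :
    (∀ (f : EuclideanSpace ℝ (Fin n) → ℝ) (lam : ℝ), 0 ≤ lam → ContDiff ℝ 2 f →
      (∀ y x : EuclideanSpace ℝ (Fin n),
          iteratedFDeriv ℝ 2 f y ![x, x] ≤ lam * ‖x‖ ^ 2) →
      ∀ α : ℝ, 0 < α → α * lam < 1 →
        Integrable (fun x => exp (α * f x)) (gaussMeasure n)) ∧
    (∀ p : MvPolynomial (Fin n) ℝ, p.totalDegree ≤ 2 →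
      ∃ β : ℝ, 0 < β ∧
        Integrable
          (fun x : EuclideanSpace ℝ (Fin n) =>
            cosh (β * MvPolynomial.eval (fun i => x i) p) - 1) (gaussMeasure n)) :=
  ⟨fun _ _ _ hf hH _ hα hαlam =>
      integrable_exp_mul_gaussMeasure_of_iteratedFDeriv_two_le hf hH hα hαlam,
    fun p hp => p.exists_integrable_cosh_mul_eval_sub_one hp⟩
end
end

section
/- Translation boundedness in the exponential space: for f ∈ L^{cosh−1}(M) and h ∈ ℝⁿ, the translate τ_h f(x) = f(x−h) belongs to L^{cosh−1}(M), and moreover ∫(cosh−1)(ρ τ_h f) M dx ≤ 2^{−1/2} e^{|h|²/2} (∫(cosh−1)(2ρ f) M dx)^{1/2}; in particular if |h| ≤ √(log 2) then ‖τ_h f‖_{cosh−1,M} ≤ 2‖f‖_{cosh−1,M}. -/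
open Real MeasureTheory
open scoped ENNReal RealInnerProductSpace

noncomputable section

/-- Luxemburg norm for the Young function `Φ` with respect to a measure `μ`. -/
def luxNorm {E : Type*} [MeasurableSpace E] (Φ : ℝ → ℝ) (μ : Measure E)
    (g : E → ℝ) : ℝ :=
  sInf {ρ : ℝ | 0 < ρ ∧ ∫ x, Φ (g x / ρ) ∂μ ≤ 1 ∧
    Integrable (fun x => Φ (g x / ρ)) μ}

/-- The Orlicz (dual) norm on the mixture space, dual to the Luxemburg
norm of the exponential space `L^{cosh−1}(μ)`. -/
def mixtureDualNorm {E : Type*} [MeasurableSpace E] (μ : Measure E)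
    (g : E → ℝ) : ℝ :=
  sSup {r : ℝ | ∃ φ : E → ℝ,
    luxNorm (fun u => Real.cosh u - 1) μ φ ≤ 1 ∧ r = ∫ x, φ x * g x ∂μ}

/-!
The Gaussian density is quasi-invariant under translations,
`M(z + h) = e^{-|h|²/2 - ⟪h, z⟫} M(z)`, so `∫ g(x - h) dM = ∫ e^{-|h|²/2 - ⟪h, z⟫} g(z) dM(z)`.
Cauchy–Schwarz and the Gaussian moment generating function `∫ e^{-2⟪h, z⟫} dM = e^{2|h|²}`
bound this by `e^{|h|²/2} ‖g‖_{L²(M)}`. For `g = cosh (ρ f) - 1` the pointwise inequality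
`(cosh u - 1)² ≤ (cosh 2u - 1) / 2` turns the `L²` norm into the modular of `2ρf`. When
`|h|² ≤ log 2` the constant `2^{-1/2} e^{|h|²/2}` is at most `1`, so every admissible radius `ρ`
of `f` in the Luxemburg norm yields the admissible radius `2ρ` of the translate, and conversely
with `-h`.
-/

lemma cosh_sub_one_sq_le (u : ℝ) : (cosh u - 1) ^ 2 ≤ (cosh (2 * u) - 1) / 2 := by
  nlinarith [Real.one_le_cosh u, Real.cosh_two_mul u, Real.cosh_sq u]

section CoshSubOne

variable {E : Type*} [MeasurableSpace E] {μ : Measure E} {f : E → ℝ} {ρ : ℝ}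

lemma integrable_cosh_sub_one_sq (hf : Measurable f)
    (hint : Integrable (fun x => cosh (2 * ρ * f x) - 1) μ) :
    Integrable (fun x => (cosh (ρ * f x) - 1) ^ 2) μ := by
  refine (hint.div_const 2).mono' (by fun_prop) (.of_forall fun x => ?_)
  rw [Real.norm_of_nonneg (sq_nonneg _), mul_assoc]
  exact cosh_sub_one_sq_le _

lemma integral_cosh_sub_one_sq_le (hf : Measurable f)
    (hint : Integrable (fun x => cosh (2 * ρ * f x) - 1) μ) :
    ∫ x, (cosh (ρ * f x) - 1) ^ 2 ∂μ ≤ (∫ x, (cosh (2 * ρ * f x) - 1) ∂μ) / 2 := by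
  rw [← integral_div]
  refine integral_mono (integrable_cosh_sub_one_sq hf hint) (hint.div_const 2) fun x => ?_
  simpa only [mul_assoc] using cosh_sub_one_sq_le (ρ * f x)

end CoshSubOne

section Luxemburg

variable {E : Type*} [MeasurableSpace E]

def LuxAdmissible (Φ : ℝ → ℝ) (μ : Measure E) (g : E → ℝ) (ρ : ℝ) : Prop :=
  0 < ρ ∧ ∫ x, Φ (g x / ρ) ∂μ ≤ 1 ∧ Integrable (fun x => Φ (g x / ρ)) μ

lemma luxNorm_le_mul_luxNorm {Φ : ℝ → ℝ} {μ : Measure E} {g g' : E → ℝ} {c : ℝ} (hc : 0 ≤ c)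
    (hmap : ∀ ρ, LuxAdmissible Φ μ g ρ → LuxAdmissible Φ μ g' (c * ρ))
    (hne : (∃ ρ, LuxAdmissible Φ μ g' ρ) → ∃ ρ, LuxAdmissible Φ μ g ρ) :
    luxNorm Φ μ g' ≤ c * luxNorm Φ μ g := by
  change sInf {ρ | LuxAdmissible Φ μ g' ρ} ≤ c * sInf {ρ | LuxAdmissible Φ μ g ρ}
  rcases Set.eq_empty_or_nonempty {ρ | LuxAdmissible Φ μ g ρ} with hS | ⟨ρ₀, hρ₀⟩
  · have hT : {ρ | LuxAdmissible Φ μ g' ρ} = ∅ :=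
      Set.eq_empty_of_forall_notMem fun ρ hρ => by
        obtain ⟨ρ', hρ'⟩ := hne ⟨ρ, hρ⟩
        exact hS.subset hρ'
    rw [hS, hT, Real.sInf_empty, mul_zero]
  · rw [← smul_eq_mul, ← Real.sInf_smul_of_nonneg hc]
    exact csInf_le_csInf ⟨0, fun ρ hρ => hρ.1.le⟩ ⟨c * ρ₀, Set.smul_mem_smul_set hρ₀⟩
      (by rintro _ ⟨ρ, hρ, rfl⟩; exact hmap ρ hρ)

end Luxemburg

namespace gaussMeasure

variable {n : ℕ}

lemma measurable_gaussM : Measurable (gaussM n) := by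
  unfold gaussM; fun_prop

lemma gaussM_add (z h : EuclideanSpace ℝ (Fin n)) :
    gaussM n (z + h) = exp (-‖h‖ ^ 2 / 2 - ⟪h, z⟫) * gaussM n z := by
  simp only [gaussM, norm_add_sq_real, real_inner_comm z h]
  rw [mul_left_comm, ← Real.exp_add]
  ring_nf

lemma lintegral_eq_lintegral_gaussM_mul (F : EuclideanSpace ℝ (Fin n) → ℝ≥0∞) (hF : Measurable F) :
    ∫⁻ x, F x ∂gaussMeasure n = ∫⁻ x, ENNReal.ofReal (gaussM n x) * F x :=
  lintegral_withDensity_eq_lintegral_mul _ measurable_gaussM.ennreal_ofReal hF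

instance isProbabilityMeasure : IsProbabilityMeasure (gaussMeasure n) := by
  have hint : ∫ x : EuclideanSpace ℝ (Fin n), gaussM n x = 1 := by
    have h2π : (0 : ℝ) < 2 * π := by positivity
    have hexp : ∀ x : EuclideanSpace ℝ (Fin n), -‖x‖ ^ 2 / 2 = -(1 / 2) * ‖x‖ ^ 2 :=
      fun x => by ring
    simp only [gaussM, integral_const_mul, hexp]
    rw [GaussianFourier.integral_rexp_neg_mul_sq_norm (by norm_num), finrank_euclideanSpace_fin,
      div_div_eq_mul_div, div_one, mul_comm π, ← Real.rpow_add h2π,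
      neg_div, neg_add_cancel, Real.rpow_zero]
  constructor
  rw [gaussMeasure, withDensity_apply _ MeasurableSet.univ, Measure.restrict_univ,
    ← ofReal_integral_eq_lintegral_ofReal (.of_integral_ne_zero (by simp [hint]))
      (.of_forall fun x => by unfold gaussM; positivity), hint, ENNReal.ofReal_one]

lemma lintegral_comp_sub (F : EuclideanSpace ℝ (Fin n) → ℝ≥0∞) (hF : Measurable F)
    (h : EuclideanSpace ℝ (Fin n)) :
    ∫⁻ x, F (x - h) ∂gaussMeasure n =
      ∫⁻ z, ENNReal.ofReal (exp (-‖h‖ ^ 2 / 2 - ⟪h, z⟫)) * F z ∂gaussMeasure n := by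
  rw [lintegral_eq_lintegral_gaussM_mul (fun x => F (x - h)) (hF.comp (measurable_sub_const h)),
    lintegral_eq_lintegral_gaussM_mul _ (by fun_prop)]
  calc ∫⁻ x, ENNReal.ofReal (gaussM n x) * F (x - h)
      = ∫⁻ x, ENNReal.ofReal (gaussM n (x - h + h)) * F (x - h) := by simp only [sub_add_cancel]
    _ = ∫⁻ z, ENNReal.ofReal (gaussM n (z + h)) * F z :=
        lintegral_sub_right_eq_self (fun z => ENNReal.ofReal (gaussM n (z + h)) * F z) h
    _ = _ := by
        congr 1 with z
        rw [gaussM_add, ENNReal.ofReal_mul (exp_pos _).le]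
        ring

lemma lintegral_exp_inner (t : ℝ) (h : EuclideanSpace ℝ (Fin n)) :
    ∫⁻ z, ENNReal.ofReal (exp (t * ⟪h, z⟫)) ∂gaussMeasure n =
      ENNReal.ofReal (exp (t ^ 2 * ‖h‖ ^ 2 / 2)) := by
  set a := t ^ 2 * ‖h‖ ^ 2 / 2
  -- quasi-invariance with `F = 1` and the shift `-(t • h)`, since `M` has total mass `1`
  have hmass : ENNReal.ofReal (exp (-a)) * ∫⁻ z, ENNReal.ofReal (exp (t * ⟪h, z⟫)) ∂gaussMeasure n
      = 1 := by
    have h1 := lintegral_comp_sub (n := n) (fun _ => 1) measurable_const (-(t • h))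
    simp only [lintegral_const, measure_univ, mul_one, norm_neg, norm_smul, inner_neg_left,
      inner_smul_left] at h1
    rw [← lintegral_const_mul _ (by fun_prop), h1]
    congr 1 with z
    rw [← ENNReal.ofReal_mul (exp_pos _).le, ← Real.exp_add]
    congr 2
    simp only [a, Real.norm_eq_abs, mul_pow, sq_abs, conj_trivial]
    ring
  calc ∫⁻ z, ENNReal.ofReal (exp (t * ⟪h, z⟫)) ∂gaussMeasure n
      = ENNReal.ofReal (exp a) * (ENNReal.ofReal (exp (-a)) *
          ∫⁻ z, ENNReal.ofReal (exp (t * ⟪h, z⟫)) ∂gaussMeasure n) := by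
        rw [← mul_assoc, ← ENNReal.ofReal_mul (exp_pos _).le, ← Real.exp_add, add_neg_cancel,
          Real.exp_zero, ENNReal.ofReal_one, one_mul]
    _ = ENNReal.ofReal (exp a) := by rw [hmass, mul_one]

lemma lintegral_comp_sub_le (F : EuclideanSpace ℝ (Fin n) → ℝ≥0∞) (hF : Measurable F)
    (h : EuclideanSpace ℝ (Fin n)) :
    ∫⁻ x, F (x - h) ∂gaussMeasure n ≤
      ENNReal.ofReal (exp (‖h‖ ^ 2 / 2)) * (∫⁻ x, F x ^ 2 ∂gaussMeasure n) ^ (1 / 2 : ℝ) := by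
  set w : EuclideanSpace ℝ (Fin n) → ℝ≥0∞ :=
    fun z => ENNReal.ofReal (exp (-‖h‖ ^ 2 / 2 - ⟪h, z⟫))
  have hw : Measurable w := by fun_prop
  have hw_sq : ∫⁻ z, w z ^ (2 : ℝ) ∂gaussMeasure n = ENNReal.ofReal (exp (‖h‖ ^ 2)) := by
    have hpt : ∀ z, w z ^ (2 : ℝ) =
        ENNReal.ofReal (exp (-‖h‖ ^ 2)) * ENNReal.ofReal (exp (-2 * ⟪h, z⟫)) := fun z => by
      rw [ENNReal.ofReal_rpow_of_pos (exp_pos _), ← Real.exp_mul,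
        ← ENNReal.ofReal_mul (exp_pos _).le, ← Real.exp_add]
      ring_nf
    simp only [hpt]
    rw [lintegral_const_mul _ (by fun_prop), lintegral_exp_inner,
      ← ENNReal.ofReal_mul (exp_pos _).le, ← Real.exp_add]
    ring_nf
  calc ∫⁻ x, F (x - h) ∂gaussMeasure n
      = ∫⁻ z, (w * F) z ∂gaussMeasure n := lintegral_comp_sub F hF h
    _ ≤ (∫⁻ z, w z ^ (2 : ℝ) ∂gaussMeasure n) ^ (1 / 2 : ℝ) *
          (∫⁻ z, F z ^ (2 : ℝ) ∂gaussMeasure n) ^ (1 / 2 : ℝ) :=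
        ENNReal.lintegral_mul_le_Lp_mul_Lq _ .two_two hw.aemeasurable hF.aemeasurable
    _ = _ := by
        rw [hw_sq, ENNReal.ofReal_rpow_of_pos (exp_pos _), ← Real.exp_mul]
        simp only [ENNReal.rpow_two]
        ring_nf

section Translate

variable {g : EuclideanSpace ℝ (Fin n) → ℝ}

lemma lintegral_ofReal_comp_sub_le (hg0 : ∀ x, 0 ≤ g x) (hg : Measurable g)
    (hg2 : Integrable (fun x => g x ^ 2) (gaussMeasure n)) (h : EuclideanSpace ℝ (Fin n)) :
    ∫⁻ x, ENNReal.ofReal (g (x - h)) ∂gaussMeasure n ≤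
      ENNReal.ofReal (exp (‖h‖ ^ 2 / 2) * √(∫ x, g x ^ 2 ∂gaussMeasure n)) := by
  have hsq : ∫⁻ x, ENNReal.ofReal (g x) ^ 2 ∂gaussMeasure n =
      ENNReal.ofReal (∫ x, g x ^ 2 ∂gaussMeasure n) := by
    simp only [← ENNReal.ofReal_pow (hg0 _)]
    exact (ofReal_integral_eq_lintegral_ofReal hg2 (.of_forall fun x => by positivity)).symm
  calc ∫⁻ x, ENNReal.ofReal (g (x - h)) ∂gaussMeasure n
      ≤ ENNReal.ofReal (exp (‖h‖ ^ 2 / 2)) *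
          (∫⁻ x, ENNReal.ofReal (g x) ^ 2 ∂gaussMeasure n) ^ (1 / 2 : ℝ) :=
        lintegral_comp_sub_le (fun x => ENNReal.ofReal (g x)) hg.ennreal_ofReal h
    _ = _ := by
        rw [hsq, ENNReal.ofReal_rpow_of_nonneg (integral_nonneg fun x => by positivity)
          (by norm_num), ← Real.sqrt_eq_rpow, ENNReal.ofReal_mul (exp_pos _).le]

lemma integrable_comp_sub (hg0 : ∀ x, 0 ≤ g x) (hg : Measurable g)
    (hg2 : Integrable (fun x => g x ^ 2) (gaussMeasure n)) (h : EuclideanSpace ℝ (Fin n)) :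
    Integrable (fun x => g (x - h)) (gaussMeasure n) := by
  refine ⟨(hg.comp (measurable_sub_const h)).aestronglyMeasurable, ?_⟩
  rw [hasFiniteIntegral_iff_ofReal (.of_forall fun x => hg0 _)]
  exact (lintegral_ofReal_comp_sub_le hg0 hg hg2 h).trans_lt ENNReal.ofReal_lt_top

lemma integral_comp_sub_le (hg0 : ∀ x, 0 ≤ g x) (hg : Measurable g)
    (hg2 : Integrable (fun x => g x ^ 2) (gaussMeasure n)) (h : EuclideanSpace ℝ (Fin n)) :
    ∫ x, g (x - h) ∂gaussMeasure n ≤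
      exp (‖h‖ ^ 2 / 2) * √(∫ x, g x ^ 2 ∂gaussMeasure n) := by
  rw [integral_eq_lintegral_of_nonneg_ae (.of_forall fun x => hg0 _)
    (hg.comp (measurable_sub_const h)).aestronglyMeasurable]
  exact ENNReal.toReal_le_of_le_ofReal (by positivity) (lintegral_ofReal_comp_sub_le hg0 hg hg2 h)

end Translate

section CoshTranslate

variable {f : EuclideanSpace ℝ (Fin n) → ℝ} {ρ : ℝ}

lemma integrable_cosh_comp_sub (hf : Measurable f)
    (hint : Integrable (fun x => cosh (2 * ρ * f x) - 1) (gaussMeasure n))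
    (h : EuclideanSpace ℝ (Fin n)) :
    Integrable (fun x => cosh (ρ * f (x - h)) - 1) (gaussMeasure n) :=
  integrable_comp_sub (g := fun x => cosh (ρ * f x) - 1)
    (fun x => sub_nonneg.2 (Real.one_le_cosh _)) (by fun_prop)
    (integrable_cosh_sub_one_sq hf hint) h

lemma integral_cosh_comp_sub_le (hf : Measurable f)
    (hint : Integrable (fun x => cosh (2 * ρ * f x) - 1) (gaussMeasure n))
    (h : EuclideanSpace ℝ (Fin n)) :
    ∫ x, (cosh (ρ * f (x - h)) - 1) ∂gaussMeasure n ≤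
      (√2)⁻¹ * exp (‖h‖ ^ 2 / 2) * √(∫ x, (cosh (2 * ρ * f x) - 1) ∂gaussMeasure n) := by
  calc ∫ x, (cosh (ρ * f (x - h)) - 1) ∂gaussMeasure n
      ≤ exp (‖h‖ ^ 2 / 2) * √(∫ x, (cosh (ρ * f x) - 1) ^ 2 ∂gaussMeasure n) :=
        integral_comp_sub_le (g := fun x => cosh (ρ * f x) - 1)
          (fun x => sub_nonneg.2 (Real.one_le_cosh _)) (by fun_prop)
          (integrable_cosh_sub_one_sq hf hint) h
    _ ≤ exp (‖h‖ ^ 2 / 2) * √((∫ x, (cosh (2 * ρ * f x) - 1) ∂gaussMeasure n) / 2) := by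
        gcongr
        exact integral_cosh_sub_one_sq_le hf hint
    _ = _ := by
        rw [Real.sqrt_div' _ zero_le_two]
        ring

variable {h : EuclideanSpace ℝ (Fin n)}

lemma luxAdmissible_two_mul_comp_sub (hf : Measurable f) (hh : ‖h‖ ≤ √(log 2))
    (hρ : LuxAdmissible (fun u => cosh u - 1) (gaussMeasure n) f ρ) :
    LuxAdmissible (fun u => cosh u - 1) (gaussMeasure n) (fun x => f (x - h)) (2 * ρ) := by
  obtain ⟨hρ0, hle, hint⟩ := hρ
  have hr : 2 * (2 * ρ)⁻¹ = ρ⁻¹ := by field_simp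
  simp only [div_eq_inv_mul, ← hr] at hle hint
  have hexp : exp (‖h‖ ^ 2 / 2) ≤ √2 := by
    have hsq : ‖h‖ ^ 2 ≤ log 2 := by
      simpa [Real.sq_sqrt (log_nonneg one_le_two)] using pow_le_pow_left₀ (norm_nonneg h) hh 2
    calc exp (‖h‖ ^ 2 / 2) ≤ exp (log 2 / 2) := by gcongr
      _ = √2 := by rw [Real.exp_half, Real.exp_log two_pos]
  refine ⟨by positivity, ?_, by
    simpa only [div_eq_inv_mul] using integrable_cosh_comp_sub hf hint h⟩
  simp only [div_eq_inv_mul]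
  calc ∫ x, (cosh ((2 * ρ)⁻¹ * f (x - h)) - 1) ∂gaussMeasure n
      ≤ (√2)⁻¹ * exp (‖h‖ ^ 2 / 2) *
          √(∫ x, (cosh (2 * (2 * ρ)⁻¹ * f x) - 1) ∂gaussMeasure n) :=
        integral_cosh_comp_sub_le hf hint h
    _ ≤ (√2)⁻¹ * √2 * 1 := by
        gcongr
        exact Real.sqrt_le_one.mpr hle
    _ = 1 := by field_simp

end CoshTranslate

end gaussMeasure

/-- translation boundedness in the exponential space: the translate
`τ_h f = f(·−h)` of `f ∈ L^{cosh−1}(M)` is in `L^{cosh−1}(M)`, with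
`∫(cosh−1)(ρτ_h f)dM ≤ 2^{−1/2}e^{|h|²/2}(∫(cosh−1)(2ρf)dM)^{1/2}`, and
`|h| ≤ √(log 2)` implies `‖τ_h f‖ ≤ 2‖f‖` in the Luxemburg norm. -/
theorem translation_exponential_space {n : ℕ}
    (f : EuclideanSpace ℝ (Fin n) → ℝ) (hmeas : Measurable f)
    (h : EuclideanSpace ℝ (Fin n)) :
    ((∃ α : ℝ, 0 < α ∧
        Integrable (fun x => cosh (α * f x) - 1) (gaussMeasure n)) →
      (∃ α : ℝ, 0 < α ∧
        Integrable (fun x => cosh (α * f (x - h)) - 1) (gaussMeasure n))) ∧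
    (∀ ρ : ℝ, 0 < ρ →
      Integrable (fun x => cosh (2 * ρ * f x) - 1) (gaussMeasure n) →
      ∫ x, (cosh (ρ * f (x - h)) - 1) ∂(gaussMeasure n) ≤
        (Real.sqrt 2)⁻¹ * exp (‖h‖ ^ 2 / 2) *
          Real.sqrt (∫ x, (cosh (2 * ρ * f x) - 1) ∂(gaussMeasure n))) ∧
    (‖h‖ ≤ Real.sqrt (log 2) →
      luxNorm (fun u => cosh u - 1) (gaussMeasure n) (fun x => f (x - h)) ≤
        2 * luxNorm (fun u => cosh u - 1) (gaussMeasure n) f) := by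
  refine ⟨?_, fun ρ _ hint => gaussMeasure.integral_cosh_comp_sub_le hmeas hint h, fun hh => ?_⟩
  · rintro ⟨α, hα, hint⟩
    refine ⟨α / 2, half_pos hα, gaussMeasure.integrable_cosh_comp_sub hmeas ?_ h⟩
    simpa only [mul_div_cancel₀ α two_ne_zero] using hint
  · refine luxNorm_le_mul_luxNorm zero_le_two
      (fun ρ hρ => gaussMeasure.luxAdmissible_two_mul_comp_sub hmeas hh hρ) ?_
    rintro ⟨ρ, hρ⟩
    refine ⟨2 * ρ, ?_⟩
    simpa only [sub_neg_eq_add, add_sub_cancel_right] using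
      gaussMeasure.luxAdmissible_two_mul_comp_sub (f := fun x => f (x - h)) (h := -h)
        (hmeas.comp (measurable_sub_const h)) (by rwa [norm_neg]) hρ
end
end

section
/- Equality of exponential spaces along the maximal exponential model: if U ∈ L^{cosh−1}(M) has E_M[U] = 0 and E_M[e^{αU}] < ∞ for some α > 1 as well as E_M[e^{−αU}] < ∞ (i.e. U is in the interior of the domain of the cumulant functional), and f = e^{U − K_M(U)} with K_M(U) = log E_M[e^U], then L^{cosh−1}(f·M) = L^{cosh−1}(M) as sets: a measurable V satisfies ∫(cosh−1)(αV) f M dx < ∞ for some α > 0 iff ∫(cosh−1)(α'V) M dx < ∞ for some α' > 0. -/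
/-!
For conjugate exponents `α, β` and `w ≥ 0`, Young's inequality and `cosh ^ β s ≤ exp (β |s|) ≤
2 cosh (β s)` give `w (cosh (t / β) - 1) ≤ w ^ α / α + (2 / β) (cosh t - 1) + 2 / β`.
With `w = f` this bounds the `f·M`-modular of `V / β` by the `M`-modular of `V` plus `E_M[f ^ α]`;
with the measure `f·M` and `w = f⁻¹` it gives the converse, at the cost of
`E_{f·M}[f ^ (-α)] = E_M[f ^ (1 - α)]`. Both moments are finite since `exp (s U) ≤ exp (α U) +
exp (-α U)` for `|s| ≤ α`.
-/

open Real MeasureTheory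
open scoped ENNReal

noncomputable section

lemma Real.cosh_le_exp_abs (x : ℝ) : cosh x ≤ exp |x| := by
  rw [← cosh_abs, cosh_eq]
  linarith [exp_le_exp.2 (neg_le_self (abs_nonneg x))]

lemma Real.exp_abs_le_two_mul_cosh (x : ℝ) : exp |x| ≤ 2 * cosh x := by
  rw [cosh_eq]
  linarith [exp_abs_le x]

lemma Real.cosh_rpow_le_two_mul_cosh_mul {q : ℝ} (hq : 0 ≤ q) (x : ℝ) :
    cosh x ^ q ≤ 2 * cosh (q * x) :=
  calc cosh x ^ q ≤ exp |x| ^ q := rpow_le_rpow (cosh_pos x).le (cosh_le_exp_abs x) hq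
    _ = exp |q * x| := by rw [← exp_mul, abs_mul, abs_of_nonneg hq, mul_comm]
    _ ≤ 2 * cosh (q * x) := exp_abs_le_two_mul_cosh _

lemma Real.mul_cosh_div_sub_one_le {p q w : ℝ} (hpq : p.HolderConjugate q) (hw : 0 ≤ w)
    (a y : ℝ) : w * (cosh (a / q * y) - 1) ≤ w ^ p / p + 2 / q * (cosh (a * y) - 1) + 2 / q :=
  calc w * (cosh (a / q * y) - 1) ≤ w * cosh (a / q * y) := by
        gcongr
        exact sub_le_self _ zero_le_one
    _ ≤ w ^ p / p + cosh (a / q * y) ^ q / q :=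
        young_inequality_of_nonneg hw (cosh_pos _).le hpq
    _ ≤ w ^ p / p + 2 * cosh (q * (a / q * y)) / q := by
        gcongr
        · exact hpq.symm.nonneg
        · exact cosh_rpow_le_two_mul_cosh_mul hpq.symm.nonneg _
    _ = w ^ p / p + 2 / q * (cosh (a * y) - 1) + 2 / q := by
        rw [← mul_assoc, mul_div_cancel₀ _ hpq.symm.ne_zero]
        ring

section

variable {E : Type*} [MeasurableSpace E] {μ : Measure E}

theorem integrable_exp_mul_of_abs_le {U : E → ℝ} {α t : ℝ} (hU : AEStronglyMeasurable U μ)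
    (hpos : Integrable (fun x => exp (α * U x)) μ) (hneg : Integrable (fun x => exp (-α * U x)) μ)
    (ht : |t| ≤ α) : Integrable (fun x => exp (t * U x)) μ := by
  refine (hpos.add hneg).mono' (continuous_exp.comp_aestronglyMeasurable (hU.const_mul t))
    (.of_forall fun x => ?_)
  have hα : 0 ≤ α := (abs_nonneg t).trans ht
  have hexp : t * U x ≤ |α * U x| :=
    calc t * U x ≤ |t| * |U x| := abs_mul t (U x) ▸ le_abs_self _
      _ ≤ |α * U x| := by rw [abs_mul, abs_of_nonneg hα]; gcongr
  rw [norm_of_nonneg (exp_pos _).le]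
  show exp (t * U x) ≤ exp (α * U x) + exp (-α * U x)
  rw [neg_mul]
  exact (exp_le_exp.2 hexp).trans (exp_abs_le _)

theorem integrable_exp_sub_rpow_of_abs_le {U : E → ℝ} {α s : ℝ} (hU : AEStronglyMeasurable U μ)
    (hpos : Integrable (fun x => exp (α * U x)) μ) (hneg : Integrable (fun x => exp (-α * U x)) μ)
    (K : ℝ) (hs : |s| ≤ α) : Integrable (fun x => exp (U x - K) ^ s) μ := by
  refine ((integrable_exp_mul_of_abs_le hU hpos hneg hs).const_mul (exp (-(s * K)))).congr
    (.of_forall fun x => ?_)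
  show exp (-(s * K)) * exp (s * U x) = exp (U x - K) ^ s
  rw [← exp_mul, ← exp_add]
  congr 1
  ring

theorem integrable_withDensity_ofReal_iff {w : E → ℝ} (hw : Measurable w) (hw0 : ∀ x, 0 ≤ w x)
    {g : E → ℝ} :
    Integrable g (μ.withDensity fun x => ENNReal.ofReal (w x)) ↔
      Integrable (fun x => w x * g x) μ := by
  rw [integrable_withDensity_iff hw.ennreal_ofReal (.of_forall fun _ => ENNReal.ofReal_lt_top)]
  refine integrable_congr (.of_forall fun x => ?_)
  simp only [ENNReal.toReal_ofReal (hw0 x), mul_comm]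

variable {p q a : ℝ} {w V : E → ℝ}

theorem integrable_mul_cosh_div_sub_one [IsFiniteMeasure μ] (hpq : p.HolderConjugate q)
    (hw : AEStronglyMeasurable w μ) (hw0 : ∀ x, 0 ≤ w x) (hwp : Integrable (fun x => w x ^ p) μ)
    (hV : AEStronglyMeasurable V μ) (hcosh : Integrable (fun x => cosh (a * V x) - 1) μ) :
    Integrable (fun x => w x * (cosh (a / q * V x) - 1)) μ := by
  refine Integrable.mono' (((hwp.div_const p).add (hcosh.const_mul (2 / q))).add
    (integrable_const (2 / q))) (hw.mul ((continuous_cosh.comp_aestronglyMeasurable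
      (hV.const_mul _)).sub aestronglyMeasurable_const)) (.of_forall fun x => ?_)
  rw [norm_of_nonneg (mul_nonneg (hw0 x) (sub_nonneg.2 (one_le_cosh _)))]
  exact mul_cosh_div_sub_one_le hpq (hw0 x) a (V x)

theorem integrable_withDensity_cosh_div_sub_one [IsFiniteMeasure μ] (hpq : p.HolderConjugate q)
    (hw : Measurable w) (hw0 : ∀ x, 0 ≤ w x) (hwp : Integrable (fun x => w x ^ p) μ)
    (hV : AEStronglyMeasurable V μ) (hcosh : Integrable (fun x => cosh (a * V x) - 1) μ) :
    Integrable (fun x => cosh (a / q * V x) - 1) (μ.withDensity fun x => ENNReal.ofReal (w x)) :=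
  (integrable_withDensity_ofReal_iff hw hw0).2
    (integrable_mul_cosh_div_sub_one hpq hw.aestronglyMeasurable hw0 hwp hV hcosh)

/-- Since `μ = w⁻¹ • (w • μ)`, this is `integrable_withDensity_cosh_div_sub_one` for the measure
`w • μ` and the weight `w⁻¹`. -/
theorem integrable_cosh_div_sub_one_of_withDensity (hpq : p.HolderConjugate q)
    (hw : Measurable w) (hw0 : ∀ x, 0 < w x) (hw_int : Integrable w μ)
    (hwp : Integrable (fun x => w x ^ (1 - p)) μ) (hV : Measurable V)
    (hcosh : Integrable (fun x => cosh (a * V x) - 1)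
      (μ.withDensity fun x => ENNReal.ofReal (w x))) :
    Integrable (fun x => cosh (a / q * V x) - 1) μ := by
  have : IsFiniteMeasure (μ.withDensity fun x => ENNReal.ofReal (w x)) :=
    isFiniteMeasure_withDensity_ofReal hw_int.hasFiniteIntegral
  have hwp_inv : Integrable (fun x => (w x)⁻¹ ^ p)
      (μ.withDensity fun x => ENNReal.ofReal (w x)) :=
    (integrable_withDensity_ofReal_iff hw fun x => (hw0 x).le).2 <| hwp.congr (.of_forall fun x => by
      show w x ^ (1 - p) = w x * (w x)⁻¹ ^ p
      rw [inv_rpow (hw0 x).le, rpow_sub (hw0 x), rpow_one, div_eq_mul_inv])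
  refine ((integrable_withDensity_ofReal_iff hw fun x => (hw0 x).le).1 (integrable_mul_cosh_div_sub_one hpq hw.inv.aestronglyMeasurable
    (fun x => (inv_pos.2 (hw0 x)).le) hwp_inv hV.aestronglyMeasurable hcosh)).congr
    (.of_forall fun x => ?_)
  exact mul_inv_cancel_left₀ (hw0 x).ne' _

end

instance isFiniteMeasure_gaussMeasure (n : ℕ) : IsFiniteMeasure (gaussMeasure n) := by
  have hint : Integrable fun x : EuclideanSpace ℝ (Fin n) => exp (-(1 / 2) * ‖x‖ ^ 2) := by
    refine .of_integral_ne_zero ?_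
    rw [GaussianFourier.integral_rexp_neg_mul_sq_norm (by norm_num)]
    positivity
  refine isFiniteMeasure_withDensity_ofReal
    ((hint.const_mul ((2 * π) ^ (-(n : ℝ) / 2))).congr ?_).hasFiniteIntegral
  filter_upwards with x
  rw [gaussM]
  ring_nf

theorem exponential_spaces_equal_general {n : ℕ}
    (U : EuclideanSpace ℝ (Fin n) → ℝ) (hU : Measurable U)
    (α : ℝ) (hα : 1 < α)
    (hp : Integrable (fun x => exp (α * U x)) (gaussMeasure n))
    (hq : Integrable (fun x => exp (-α * U x)) (gaussMeasure n))
    (f : EuclideanSpace ℝ (Fin n) → ℝ)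
    (hf : f = fun x => exp (U x - log (∫ y, exp (U y) ∂(gaussMeasure n))))
    (V : EuclideanSpace ℝ (Fin n) → ℝ) (hV : Measurable V) :
    (∃ a : ℝ, 0 < a ∧
        Integrable (fun x => cosh (a * V x) - 1)
          ((gaussMeasure n).withDensity fun x => ENNReal.ofReal (f x))) ↔
      (∃ a : ℝ, 0 < a ∧
        Integrable (fun x => cosh (a * V x) - 1) (gaussMeasure n)) := by
  have hαq : α.HolderConjugate α.conjExponent := .conjExponent hα
  have hf_meas : Measurable f := hf ▸ (hU.sub measurable_const).exp
  have hf_pos : ∀ x, 0 < f x := fun x => hf ▸ exp_pos _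
  have hf_rpow : ∀ s, |s| ≤ α → Integrable (fun x => f x ^ s) (gaussMeasure n) := fun s hs =>
    hf ▸ integrable_exp_sub_rpow_of_abs_le hU.aestronglyMeasurable hp hq _ hs
  constructor
  · rintro ⟨a, ha, h⟩
    refine ⟨a / α.conjExponent, div_pos ha hαq.symm.pos,
      integrable_cosh_div_sub_one_of_withDensity hαq hf_meas hf_pos ?_ ?_ hV h⟩
    · simpa using hf_rpow 1 (by rw [abs_one]; exact hα.le)
    · exact hf_rpow (1 - α) (by rw [abs_of_nonpos (by linarith)]; linarith)
  · rintro ⟨a, ha, h⟩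
    exact ⟨a / α.conjExponent, div_pos ha hαq.symm.pos,
      integrable_withDensity_cosh_div_sub_one hαq hf_meas (fun x => (hf_pos x).le)
        (hf_rpow α (abs_of_pos (by linarith)).le) hV.aestronglyMeasurable h⟩

/-- if `U` is in the interior of the domain of the cumulant
functional (`E_M U = 0`, `E_M e^{±αU} < ∞` for some `α > 1`) and
`f = e^{U−K_M(U)}`, then `L^{cosh−1}(f·M) = L^{cosh−1}(M)` as sets. -/
theorem exponential_spaces_equal {n : ℕ}
    (U : EuclideanSpace ℝ (Fin n) → ℝ) (hU : Measurable U)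
    (hzero : ∫ x, U x ∂(gaussMeasure n) = 0)
    (α : ℝ) (hα : 1 < α)
    (hp : Integrable (fun x => exp (α * U x)) (gaussMeasure n))
    (hq : Integrable (fun x => exp (-α * U x)) (gaussMeasure n))
    (f : EuclideanSpace ℝ (Fin n) → ℝ)
    (hf : f = fun x => exp (U x - log (∫ y, exp (U y) ∂(gaussMeasure n))))
    (V : EuclideanSpace ℝ (Fin n) → ℝ) (hV : Measurable V) :
    (∃ a : ℝ, 0 < a ∧
        Integrable (fun x => cosh (a * V x) - 1)
          ((gaussMeasure n).withDensity fun x => ENNReal.ofReal (f x))) ↔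
      (∃ a : ℝ, 0 < a ∧
        Integrable (fun x => cosh (a * V x) - 1) (gaussMeasure n)) :=
  exponential_spaces_equal_general U hU α hα hp hq f hf V hV
end
end
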